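/- Let $\alpha > 1$, let $\eta: [0,\infty) \to \mathbb{R}$ be càdlàg with $\eta_0 = 0$, and define $I_t(\beta) = \int_0^t e^{\beta\eta_s} ds$, with right-continuous inverses $\zeta(t) = \inf\{s : I_s(\alpha) > t\}$ and $h(t) = \inf\{s : I_s(\alpha-1) > t\}$. For $x > 0$ define $X_t = x e^{\eta_{\zeta(t/x^{\alpha})}}$, $A_t = \int_0^t X_s^{-1} ds$, and let $\theta$ be the right-continuous inverse of $A$. Then for all $0 \leq t < x^{\alpha-1} I_{\infty}(\alpha-1)$, one has $\zeta(\theta(t)/x^{\alpha}) = h(t/x^{\alpha-1})$, and consequently $X_{\theta(t)} = x e^{\eta_{h(t/x^{\alpha-1})}}$. -/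

import Mathlib

/-!
Put `c(u) = x^α I_u(α)`. Since `I(α)` is continuous and strictly increasing,
`ζ(c(u)/x^α) = u`, so `X_{c(u)} = x e^{η_u}`. Hence `u ↦ A_{c(u)}` and
`u ↦ x^{α-1} I_u(α-1)` are continuous with the same right derivative `x^{α-1} e^{(α-1)η_u}`
(right-continuity of `η` is exactly what the fundamental theorem of calculus and the chain rule
for right derivatives need), so they agree. Inverting, `θ(x^{α-1} I_w(α-1)) = c(w)`; with
`w = h(t/x^{α-1})` this gives `ζ(θ_t/x^α) = w`.
-/

open Real MeasureTheory Set Filter Topology intervalIntegral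

structure IsCadlag (f : ℝ → ℝ) : Prop where
  continuousWithinAt_Ici : ∀ s, ContinuousWithinAt f (Ici s) s
  exists_tendsto_nhdsLT : ∀ s, ∃ l, Tendsto f (𝓝[<] s) (𝓝 l)

namespace IsCadlag

variable {f : ℝ → ℝ}

theorem comp {g : ℝ → ℝ} (hg : Continuous g) (hf : IsCadlag f) : IsCadlag (g ∘ f) where
  continuousWithinAt_Ici s := hg.continuousAt.comp_continuousWithinAt (hf.continuousWithinAt_Ici s)
  exists_tendsto_nhdsLT s :=
    let ⟨l, hl⟩ := hf.exists_tendsto_nhdsLT s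
    ⟨g l, (hg.tendsto l).comp hl⟩

theorem measurable (hf : IsCadlag f) : Measurable f := by
  -- `f` is the pointwise limit of `f ∘ q n`, where `q n` rounds up to the grid `ℤ / (n + 1)`
  let q : ℕ → ℝ → ℝ := fun n s => ⌈s * (n + 1)⌉ / (n + 1)
  refine measurable_of_tendsto_metrizable (f := fun n => f ∘ q n)
    (fun n => (measurable_of_countable fun k : ℤ => f (k / (n + 1))).comp
      (Int.measurable_ceil.comp (measurable_id.mul_const _))) (tendsto_pi_nhds.2 fun s => ?_)
  have hq_ge : ∀ n : ℕ, s ≤ q n s := fun n => by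
    rw [le_div_iff₀ (by positivity)]; exact Int.le_ceil _
  have hq_le : ∀ n : ℕ, q n s ≤ s + 1 / (n + 1) := fun n => by
    rw [div_le_iff₀ (by positivity), add_mul, one_div_mul_cancel (by positivity)]
    exact (Int.ceil_lt_add_one _).le
  have hq : Tendsto (fun n => q n s) atTop (𝓝[≥] s) := by
    refine tendsto_nhdsWithin_of_tendsto_nhds_of_eventually_within _ ?_ (.of_forall hq_ge)
    refine tendsto_of_tendsto_of_tendsto_of_le_of_le tendsto_const_nhds ?_ hq_ge hq_le
    simpa using tendsto_const_nhds.add (tendsto_one_div_add_atTop_nhds_zero_nat (𝕜 := ℝ))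
  exact (hf.continuousWithinAt_Ici s).tendsto.comp hq

theorem isBounded_image (hf : IsCadlag f) {K : Set ℝ} (hK : IsCompact K) :
    Bornology.IsBounded (f '' K) := by
  refine hK.induction_on (by simp) (fun s t hst ht => ht.subset (image_mono hst))
    (fun s t hs ht => by rw [image_union]; exact hs.union ht) fun s _ => ?_
  obtain ⟨l, hl⟩ := hf.exists_tendsto_nhdsLT s
  refine ⟨f ⁻¹' (Metric.ball l 1 ∪ Metric.ball (f s) 1), mem_nhdsWithin_of_mem_nhds ?_,
    (Metric.isBounded_ball.union Metric.isBounded_ball).subset (image_preimage_subset _ _)⟩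
  rw [← nhdsLT_sup_nhdsGE s, preimage_union]
  exact union_mem_sup (hl (Metric.ball_mem_nhds _ one_pos))
    (hf.continuousWithinAt_Ici s (Metric.ball_mem_nhds _ one_pos))

theorem integrableOn_comp (hf : IsCadlag f) {ψ : ℝ → ℝ} (hψ : Measurable ψ) {S K : Set ℝ}
    (hS : MeasurableSet S) (hS_fin : volume S ≠ ⊤) (hK : IsCompact K) (hψK : MapsTo ψ S K) :
    IntegrableOn (f ∘ ψ) S := by
  obtain ⟨C, hC⟩ := (hf.isBounded_image hK).exists_norm_le
  refine Measure.integrableOn_of_bounded (M := C) hS_fin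
    (hf.measurable.comp hψ).aestronglyMeasurable ?_
  filter_upwards [ae_restrict_mem hS] with s hs
  exact hC _ (mem_image_of_mem f (hψK hs))

theorem intervalIntegrable (hf : IsCadlag f) (a b : ℝ) : IntervalIntegrable f volume a b :=
  (hf.integrableOn_comp measurable_id measurableSet_uIcc isCompact_uIcc.measure_lt_top.ne
    isCompact_uIcc (mapsTo_id _)).intervalIntegrable

theorem hasDerivWithinAt_integral (hf : IsCadlag f) (a u : ℝ) :
    HasDerivWithinAt (fun u => ∫ s in a..u, f s) (f u) (Ici u) u :=
  integral_hasDerivWithinAt_right (hf.intervalIntegrable a u)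
    hf.measurable.stronglyMeasurable.stronglyMeasurableAtFilter
    ((hf.continuousWithinAt_Ici u).mono Ioi_subset_Ici_self)

end IsCadlag

theorem strictMono_integral_of_pos {f : ℝ → ℝ} (hf : ∀ a b, IntervalIntegrable f volume a b)
    (hpos : ∀ s, 0 < f s) (a : ℝ) : StrictMono fun u => ∫ s in a..u, f s := fun u v huv => by
  dsimp only
  rw [← integral_add_adjacent_intervals (hf a u) (hf u v)]
  linarith [intervalIntegral_pos_of_pos (hf u v) hpos huv]

theorem continuousWithinAt_Ici_of_leftInverseOn {F ψ : ℝ → ℝ} (hψ : Monotone ψ)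
    (hF_mono : Monotone F) {u b : ℝ} (hub : u < b) (hψF : ∀ v ∈ Icc u b, ψ (F v) = v) :
    ContinuousWithinAt ψ (Ici (F u)) (F u) := by
  refine continuousWithinAt_right_of_monotoneOn_of_image_mem_nhdsWithin (hψ.monotoneOn _)
    self_mem_nhdsWithin ?_
  rw [hψF u ⟨le_rfl, hub.le⟩]
  exact mem_of_superset (Icc_mem_nhdsGE hub) fun v hv => ⟨F v, hF_mono hv.1, hψF v hv⟩

/-- `inf {s ≥ 0 | v < F s}`; as `sInf ∅ = 0`, it is `0` when `F` never exceeds `v`. -/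
noncomputable def firstPassage (F : ℝ → ℝ) (v : ℝ) : ℝ := sInf {s | 0 ≤ s ∧ v < F s}

section FirstPassage

variable {F : ℝ → ℝ}

theorem firstPassage_nonneg (F : ℝ → ℝ) (v : ℝ) : 0 ≤ firstPassage F v :=
  Real.sInf_nonneg fun _ hs => hs.1

theorem firstPassage_congr {G : ℝ → ℝ} (h : EqOn F G (Ici 0)) :
    firstPassage F = firstPassage G := by
  ext v
  unfold firstPassage
  congr 1
  ext s
  exact and_congr_right fun hs => by rw [h hs]

theorem firstPassage_const_mul {a : ℝ} (ha : 0 < a) (v : ℝ) :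
    firstPassage (fun s => a * F s) v = firstPassage F (v / a) := by
  simp only [firstPassage, div_lt_iff₀' ha]

theorem firstPassage_apply_of_strictMonoOn {R u : ℝ} (hF : StrictMonoOn F (Icc 0 R))
    (hu : u ∈ Ico 0 R) : firstPassage F (F u) = u := by
  have hsub : {s | 0 ≤ s ∧ F u < F s} ⊆ Ioi u := fun s ⟨hs0, hs⟩ =>
    lt_of_not_ge fun hsu =>
      ((hF.le_iff_le ⟨hs0, hsu.trans hu.2.le⟩ (Ico_subset_Icc_self hu)).2 hsu).not_gt hs
  have hsup : Ioc u R ⊆ {s | 0 ≤ s ∧ F u < F s} := fun s hs =>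
    ⟨hu.1.trans hs.1.le, hF (Ico_subset_Icc_self hu) ⟨hu.1.trans hs.1.le, hs.2⟩ hs.1⟩
  apply le_antisymm
  · calc firstPassage F (F u) ≤ sInf (Ioc u R) :=
          csInf_le_csInf ⟨u, fun s hs => (hsub hs).le⟩ (nonempty_Ioc.2 hu.2) hsup
      _ = u := csInf_Ioc hu.2
  · exact le_csInf ⟨R, hsup ⟨hu.2, le_rfl⟩⟩ fun s hs => (hsub hs).le

theorem StrictMono.firstPassage_apply (hF : StrictMono F) {u : ℝ} (hu : 0 ≤ u) :
    firstPassage F (F u) = u :=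
  firstPassage_apply_of_strictMonoOn (hF.strictMonoOn _) (R := u + 1) ⟨hu, lt_add_one u⟩

variable (hF : Continuous F) (hF_mono : StrictMono F) (hF0 : F 0 = 0)
include hF hF_mono hF0

theorem exists_mem_Icc_firstPassage_eq {b v : ℝ} (hb : 0 ≤ b) (hv : v ∈ Icc 0 (F b)) :
    ∃ u ∈ Icc 0 b, F u = v ∧ firstPassage F v = u := by
  obtain ⟨u, hu, rfl⟩ := intermediate_value_Icc hb hF.continuousOn (hF0 ▸ hv)
  exact ⟨u, hu, rfl, hF_mono.firstPassage_apply hu.1⟩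

theorem exists_monotone_eqOn_firstPassage {b : ℝ} (hb : 0 ≤ b) :
    ∃ ψ : ℝ → ℝ, Monotone ψ ∧ (∀ s, ψ s ∈ Icc 0 b) ∧
      EqOn ψ (firstPassage F) (Icc 0 (F b)) := by
  have hFb : 0 ≤ F b := hF0 ▸ hF_mono.monotone hb
  have hinv := fun v (hv : v ∈ Icc 0 (F b)) =>
    exists_mem_Icc_firstPassage_eq hF hF_mono hF0 hb hv
  refine ⟨IccExtend hFb fun v => firstPassage F v, Monotone.IccExtend _ ?_,
    fun s => ?_, fun v hv => IccExtend_of_mem _ _ hv⟩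
  · rintro ⟨v, hv⟩ ⟨v', hv'⟩ hvv'
    obtain ⟨u, -, rfl, hu⟩ := hinv v hv
    obtain ⟨u', -, rfl, hu'⟩ := hinv v' hv'
    simp only [hu, hu']
    exact hF_mono.le_iff_le.1 hvv'
  · obtain ⟨u, hu, -, hu'⟩ := hinv _ (projIcc 0 (F b) hFb s).2
    simpa [IccExtend, hu'] using hu

theorem firstPassage_eq_of_comp_eq {A G : ℝ → ℝ} {b w : ℝ} (hG : StrictMonoOn G (Icc 0 b))
    (hAF : ∀ u ∈ Icc 0 b, A (F u) = G u) (hw : w ∈ Ico 0 b) :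
    firstPassage A (G w) = F w := by
  have hb : 0 ≤ b := hw.1.trans hw.2.le
  have hA : StrictMonoOn A (Icc 0 (F b)) := by
    intro s hs s' hs' hss'
    obtain ⟨u, hu, rfl, -⟩ := exists_mem_Icc_firstPassage_eq hF hF_mono hF0 hb hs
    obtain ⟨u', hu', rfl, -⟩ := exists_mem_Icc_firstPassage_eq hF hF_mono hF0 hb hs'
    rw [hAF u hu, hAF u' hu']
    exact hG hu hu' (hF_mono.lt_iff_lt.1 hss')
  rw [← hAF w (Ico_subset_Icc_self hw)]
  exact firstPassage_apply_of_strictMonoOn hA ⟨hF0 ▸ hF_mono.monotone hw.1, hF_mono hw.2⟩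

end FirstPassage

theorem integral_comp_firstPassage {F F' f G : ℝ → ℝ} {b u : ℝ} (hF : Continuous F)
    (hF_mono : StrictMono F) (hF0 : F 0 = 0)
    (hF' : ∀ v ∈ Ico 0 b, HasDerivWithinAt F (F' v) (Ici v) v) (hf : IsCadlag f)
    (hG : ContinuousOn G (Icc 0 b))
    (hG' : ∀ v ∈ Ico 0 b, HasDerivWithinAt G (f v * F' v) (Ici v) v) (hu : u ∈ Icc 0 b) :
    ∫ s in 0..F u, f (firstPassage F s) = G u - G 0 := by
  -- `firstPassage F` may jump back to `0` beyond `F b`; `ψ` is a monotone, bounded substitute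
  obtain ⟨ψ, hψ_mono, hψ_mem, hψ_eq⟩ :=
    exists_monotone_eqOn_firstPassage hF hF_mono hF0 (hu.1.trans hu.2)
  have hψF : ∀ v ∈ Icc 0 b, ψ (F v) = v := fun v hv => by
    rw [hψ_eq ⟨hF0 ▸ hF_mono.monotone hv.1, hF_mono.monotone hv.2⟩,
      hF_mono.firstPassage_apply hv.1]
  have hint : ∀ a c, IntervalIntegrable (f ∘ ψ) volume a c := fun a c =>
    (hf.integrableOn_comp hψ_mono.measurable measurableSet_uIcc isCompact_uIcc.measure_lt_top.ne
      isCompact_Icc fun s _ => hψ_mem s).intervalIntegrable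
  have hderiv : ∀ v ∈ Ico 0 b,
      HasDerivWithinAt (fun v => ∫ s in 0..F v, f (ψ s)) (f v * F' v) (Ici v) v := by
    intro v hv
    have hψv := hψF v (Ico_subset_Icc_self hv)
    have hcont : ContinuousWithinAt (f ∘ ψ) (Ici (F v)) (F v) := by
      refine (hψv ▸ hf.continuousWithinAt_Ici v).comp ?_ fun s hs => hψ_mono hs
      exact continuousWithinAt_Ici_of_leftInverseOn hψ_mono hF_mono.monotone hv.2
        fun w hw => hψF w ⟨hv.1.trans hw.1, hw.2⟩
    have hP := integral_hasDerivWithinAt_right (hint 0 (F v)) (s := Ici (F v)) (t := Ioi (F v))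
      (hf.measurable.comp hψ_mono.measurable).stronglyMeasurable.stronglyMeasurableAtFilter
      (hcont.mono Ioi_subset_Ici_self)
    rw [Function.comp_apply, hψv] at hP
    exact hP.comp v (hF' v hv) fun w hw => hF_mono.monotone hw
  have hFu : 0 ≤ F u := hF0 ▸ hF_mono.monotone hu.1
  rw [← eq_of_has_deriv_right_eq hderiv (fun v hv => (hG' v hv).sub_const (G 0))
    ((continuous_primitive hint 0).comp hF).continuousOn (hG.sub continuousOn_const)
    (by simp [hF0]) u hu]
  refine integral_congr fun s hs => congrArg f (hψ_eq ?_).symm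
  rw [uIcc_of_le hFu] at hs
  exact ⟨hs.1, hs.2.trans (hF_mono.monotone hu.2)⟩

noncomputable def expIntegral (η : ℝ → ℝ) (β u : ℝ) : ℝ :=
  ∫ s in (0:ℝ)..u, exp (β * η s)

namespace IsCadlag

variable {η : ℝ → ℝ} (hη : IsCadlag η) (β : ℝ)
include hη

theorem exp_const_mul : IsCadlag fun s => exp (β * η s) :=
  hη.comp (f := η) (g := fun y => exp (β * y)) (by fun_prop)

theorem continuous_expIntegral : Continuous (expIntegral η β) :=
  continuous_primitive (hη.exp_const_mul β).intervalIntegrable 0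

theorem strictMono_expIntegral : StrictMono (expIntegral η β) :=
  strictMono_integral_of_pos (hη.exp_const_mul β).intervalIntegrable (fun _ => exp_pos _) 0

theorem hasDerivWithinAt_expIntegral (u : ℝ) :
    HasDerivWithinAt (expIntegral η β) (exp (β * η u)) (Ici u) u :=
  (hη.exp_const_mul β).hasDerivWithinAt_integral 0 u

end IsCadlag

@[simp]
theorem expIntegral_zero (η : ℝ → ℝ) (β : ℝ) : expIntegral η β 0 = 0 := integral_same

theorem expIntegral_nonpos (η : ℝ → ℝ) (β : ℝ) {u : ℝ} (hu : u ≤ 0) :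
    expIntegral η β u ≤ 0 := by
  rw [expIntegral, integral_symm, neg_nonpos]
  exact integral_nonneg hu fun _ _ => (exp_pos _).le

theorem nonneg_of_lt_mul_expIntegral (η : ℝ → ℝ) {β c t s : ℝ} (hc : 0 ≤ c) (ht : 0 ≤ t)
    (hts : t < c * expIntegral η β s) : 0 ≤ s := by
  by_contra! hs
  linarith [mul_nonpos_of_nonneg_of_nonpos hc (expIntegral_nonpos η β hs.le)]

theorem expIntegral_eqOn_comp_max_zero (η : ℝ → ℝ) (β : ℝ) :
    EqOn (expIntegral η β) (expIntegral (fun s => η (max s 0)) β) (Ici 0) := fun u hu => by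
  refine integral_congr fun s hs => ?_
  rw [uIcc_of_le (show (0:ℝ) ≤ u from hu)] at hs
  simp only [max_eq_left hs.1]

theorem isCadlag_comp_max_zero {η : ℝ → ℝ}
    (hr : ∀ s, 0 ≤ s → ContinuousWithinAt η (Ici s) s)
    (hl : ∀ s, 0 < s → ∃ l, Tendsto η (𝓝[<] s) (𝓝 l)) :
    IsCadlag fun s => η (max s 0) where
  continuousWithinAt_Ici s :=
    (hr _ (le_max_right s 0)).comp (f := fun u => max u 0)
      (continuous_id.max continuous_const).continuousWithinAt
      fun u (hu : s ≤ u) => (max_le_max_right 0 hu : max s 0 ≤ max u 0)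
  exists_tendsto_nhdsLT s := by
    rcases lt_or_ge 0 s with hs | hs
    · obtain ⟨l, hl⟩ := hl s hs
      refine ⟨l, hl.congr' ?_⟩
      filter_upwards [Ioo_mem_nhdsLT hs] with u hu using by rw [max_eq_left hu.1.le]
    · refine ⟨η 0, tendsto_const_nhds.congr' ?_⟩
      filter_upwards [self_mem_nhdsWithin] with u hu using
        by rw [max_eq_right (hu.trans_le hs).le]

theorem inv_mul_exp_mul_rpow_mul_exp {x : ℝ} (hx : 0 < x) (α y : ℝ) :
    (x * exp y)⁻¹ * (x ^ α * exp (α * y)) = x ^ (α - 1) * exp ((α - 1) * y) := by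
  rw [rpow_sub_one hx.ne', sub_mul, one_mul, exp_sub]
  field_simp

/-- The Lamperti transform `X` of `η` with index `α`, started at `x`. -/
noncomputable def lamperti (η : ℝ → ℝ) (α x t : ℝ) : ℝ :=
  x * exp (η (firstPassage (expIntegral η α) (t / x ^ α)))

/-- The right-continuous inverse `θ` of `A_t = ∫_0^t X_s⁻¹ ds`, for `X = lamperti η α x`. -/
noncomputable def cbTimeChange (η : ℝ → ℝ) (α x : ℝ) : ℝ → ℝ :=
  firstPassage fun r => ∫ s in 0..r, (lamperti η α x s)⁻¹

section Lamperti

variable {η : ℝ → ℝ} (hη : IsCadlag η) {x : ℝ} (hx : 0 < x) (α : ℝ)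
include hη hx

theorem integral_inv_lamperti {u : ℝ} (hu : 0 ≤ u) :
    ∫ s in 0..x ^ α * expIntegral η α u, (lamperti η α x s)⁻¹ =
      x ^ (α - 1) * expIntegral η (α - 1) u := by
  simp only [lamperti, ← firstPassage_const_mul (rpow_pos_of_pos hx α)]
  simpa using integral_comp_firstPassage (F := fun v => x ^ α * expIntegral η α v)
      (f := fun v => (x * exp (η v))⁻¹) (G := fun v => x ^ (α - 1) * expIntegral η (α - 1) v)
      (continuous_const.mul (hη.continuous_expIntegral α))
      ((hη.strictMono_expIntegral α).const_mul (rpow_pos_of_pos hx α)) (by simp)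
      (fun v _ => (hη.hasDerivWithinAt_expIntegral α v).const_mul _)
      (hη.comp (f := η) (g := fun y => (x * exp y)⁻¹)
        ((continuous_const.mul continuous_exp).inv₀ fun y => (mul_pos hx (exp_pos y)).ne'))
      (continuous_const.mul (hη.continuous_expIntegral (α - 1))).continuousOn
      (fun v _ => by
        simpa only [inv_mul_exp_mul_rpow_mul_exp hx] using
          (hη.hasDerivWithinAt_expIntegral (α - 1) v).const_mul (x ^ (α - 1)))
      ⟨hu, le_rfl⟩

theorem cbTimeChange_mul_expIntegral {w : ℝ} (hw : 0 ≤ w) :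
    cbTimeChange η α x (x ^ (α - 1) * expIntegral η (α - 1) w) =
      x ^ α * expIntegral η α w :=
  firstPassage_eq_of_comp_eq (continuous_const.mul (hη.continuous_expIntegral α))
    ((hη.strictMono_expIntegral α).const_mul (rpow_pos_of_pos hx α)) (by simp)
    (((hη.strictMono_expIntegral (α - 1)).const_mul (rpow_pos_of_pos hx _)).strictMonoOn _)
    (fun _ hu => integral_inv_lamperti hη hx α hu.1) (b := w + 1) ⟨hw, lt_add_one w⟩

theorem firstPassage_cbTimeChange_div {t s : ℝ} (ht : 0 ≤ t)
    (hts : t < x ^ (α - 1) * expIntegral η (α - 1) s) :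
    firstPassage (expIntegral η α) (cbTimeChange η α x t / x ^ α) =
      firstPassage (expIntegral η (α - 1)) (t / x ^ (α - 1)) := by
  have hxα1 := rpow_pos_of_pos hx (α - 1)
  obtain ⟨w, hw, hJw, hhw⟩ := exists_mem_Icc_firstPassage_eq (hη.continuous_expIntegral _)
    (hη.strictMono_expIntegral _) (expIntegral_zero _ _)
    (nonneg_of_lt_mul_expIntegral η hxα1.le ht hts)
    ⟨div_nonneg ht hxα1.le, ((div_lt_iff₀' hxα1).2 hts).le⟩
  have ht_eq : t = x ^ (α - 1) * expIntegral η (α - 1) w := by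
    rw [hJw]
    field_simp
  rw [hhw, ht_eq, cbTimeChange_mul_expIntegral hη hx α hw.1,
    mul_div_cancel_left₀ _ (rpow_pos_of_pos hx α).ne',
    (hη.strictMono_expIntegral α).firstPassage_apply hw.1]

end Lamperti

theorem stmt_16_general (α : ℝ) (η : ℝ → ℝ)
    (hηright : ∀ s : ℝ, 0 ≤ s → ContinuousWithinAt η (Set.Ici s) s)
    (hηleft : ∀ s : ℝ, 0 < s → ∃ l : ℝ, Filter.Tendsto η (nhdsWithin s (Set.Iio s)) (nhds l))
    (x : ℝ) (hx : 0 < x)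
    (I : ℝ → ℝ → ℝ) (hI : ∀ t β, I t β = ∫ s in (0:ℝ)..t, Real.exp (β * η s))
    (ζ h : ℝ → ℝ)
    (hζ : ∀ t, ζ t = sInf {s : ℝ | 0 ≤ s ∧ t < I s α})
    (hh : ∀ t, h t = sInf {s : ℝ | 0 ≤ s ∧ t < I s (α - 1)})
    (X : ℝ → ℝ) (hX : ∀ t, X t = x * Real.exp (η (ζ (t / x ^ α))))
    (A : ℝ → ℝ) (hA : ∀ t, A t = ∫ s in (0:ℝ)..t, (X s)⁻¹)
    (θ : ℝ → ℝ) (hθ : ∀ t, θ t = sInf {s : ℝ | 0 ≤ s ∧ t < A s}) :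
    ∀ t : ℝ, 0 ≤ t → (∃ s : ℝ, t < x ^ (α - 1) * I s (α - 1)) →
      ζ (θ t / x ^ α) = h (t / x ^ (α - 1)) ∧
      X (θ t) = x * Real.exp (η (h (t / x ^ (α - 1)))) := by
  rintro t ht ⟨s₀, hs₀⟩
  obtain rfl : I = fun s β => expIntegral η β s := funext₂ hI
  beta_reduce at hζ hh hs₀
  -- only `η` on `[0, ∞)` matters; extending it constantly to the left makes it càdlàg on `ℝ`
  set η' : ℝ → ℝ := fun s => η (max s 0)
  have hη' : IsCadlag η' := isCadlag_comp_max_zero hηright hηleft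
  have hJ := expIntegral_eqOn_comp_max_zero η
  have hζ' : ζ = firstPassage (expIntegral η' α) :=
    (funext hζ).trans (firstPassage_congr (hJ α))
  have hh' : h = firstPassage (expIntegral η' (α - 1)) :=
    (funext hh).trans (firstPassage_congr (hJ (α - 1)))
  have hX' : X = lamperti η' α x := funext fun s => by
    simp only [hX, hζ', lamperti, η', max_eq_left (firstPassage_nonneg _ _)]
  have hs₀_nonneg := nonneg_of_lt_mul_expIntegral η (rpow_pos_of_pos hx (α - 1)).le ht hs₀
  have hθ' : θ = cbTimeChange η' α x := by
    rw [cbTimeChange, ← hX', ← funext hA]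
    exact funext hθ
  have key := firstPassage_cbTimeChange_div hη' hx α ht (hJ _ hs₀_nonneg ▸ hs₀)
  rw [← hζ', ← hh', ← hθ'] at key
  exact ⟨key, by rw [hX, key]⟩

/-- Pathwise statement of Proposition 3: with `I_t(β) = ∫_0^t e^{βη_s} ds`,
`ζ(t) = inf{s : I_s(α) > t}`, `h(t) = inf{s : I_s(α-1) > t}`,
`X_t = x e^{η_{ζ(t/x^α)}}`, `A_t = ∫_0^t X_s⁻¹ ds` and `θ` the right-continuous
inverse of `A`, one has `ζ(θ(t)/x^α) = h(t/x^{α-1})` and hence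
`X_{θ(t)} = x e^{η_{h(t/x^{α-1})}}` for all `0 ≤ t < x^{α-1} I_∞(α-1)`
(the latter expressed via `∃ s, t < x^{α-1} I_s(α-1)`). -/
theorem stmt_16 (α : ℝ) (hα : 1 < α) (η : ℝ → ℝ) (hη0 : η 0 = 0)
    (hηright : ∀ s : ℝ, 0 ≤ s → ContinuousWithinAt η (Set.Ici s) s)
    (hηleft : ∀ s : ℝ, 0 < s → ∃ l : ℝ, Filter.Tendsto η (nhdsWithin s (Set.Iio s)) (nhds l))
    (x : ℝ) (hx : 0 < x)
    (I : ℝ → ℝ → ℝ) (hI : ∀ t β, I t β = ∫ s in (0:ℝ)..t, Real.exp (β * η s))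
    (ζ h : ℝ → ℝ)
    (hζ : ∀ t, ζ t = sInf {s : ℝ | 0 ≤ s ∧ t < I s α})
    (hh : ∀ t, h t = sInf {s : ℝ | 0 ≤ s ∧ t < I s (α - 1)})
    (X : ℝ → ℝ) (hX : ∀ t, X t = x * Real.exp (η (ζ (t / x ^ α))))
    (A : ℝ → ℝ) (hA : ∀ t, A t = ∫ s in (0:ℝ)..t, (X s)⁻¹)
    (θ : ℝ → ℝ) (hθ : ∀ t, θ t = sInf {s : ℝ | 0 ≤ s ∧ t < A s}) :
    ∀ t : ℝ, 0 ≤ t → (∃ s : ℝ, t < x ^ (α - 1) * I s (α - 1)) →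
      ζ (θ t / x ^ α) = h (t / x ^ (α - 1)) ∧
      X (θ t) = x * Real.exp (η (h (t / x ^ (α - 1)))) :=
  stmt_16_general α η hηright hηleft x hx I hI ζ h hζ hh X hX A hA θ hθ
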